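/- Let u,v,w ∈ S_n and let 1≤i<n with ℓ(s_i w)>ℓ(w). If ℓ(s_i v)<ℓ(v), then c_{u,v}^{s_i w} = −((1+βt_{i+1})/(t_i−t_{i+1}))·c_{u,v}^w|_{t_i↔t_{i+1}} + ((1+βt_i)/(t_i−t_{i+1}))·c_{u,v}^w + c_{u,s_i v}^w|_{t_i↔t_{i+1}}. If ℓ(s_i v)>ℓ(v), then c_{u,v}^{s_i w} = −((1+βt_i)/(t_i−t_{i+1}))·c_{u,v}^w|_{t_i↔t_{i+1}} + ((1+βt_i)/(t_i−t_{i+1}))·c_{u,v}^w. -/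

import Mathlib

open MvPolynomial

noncomputable section

namespace BPDPuzzle

/-- `x ⊖ y = (x - y)/(1 + β·y)`. -/
def ominus {K : Type*} [Field K] (β a b : K) : K := (a - b) / (1 + β * b)

/-- A permutation of `ℕ` lying in `S_∞`, i.e. fixing all sufficiently large integers. -/
def FinPerm (w : Equiv.Perm ℕ) : Prop := ∃ N : ℕ, ∀ j, N ≤ j → w j = j

/-- A permutation of `ℕ` lying in `S_n` (0-based positions `0, …, n-1`). -/
def InSn (n : ℕ) (w : Equiv.Perm ℕ) : Prop := ∀ j, n ≤ j → w j = j

/-- Coxeter length: the number of inversions. -/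
def len (w : Equiv.Perm ℕ) : ℕ := Set.ncard {p : ℕ × ℕ | p.1 < p.2 ∧ w p.2 < w p.1}

/-- The simple transposition `s_i`, exchanging the (0-based) positions `i` and `i+1`. -/
def sTr (i : ℕ) : Equiv.Perm ℕ := Equiv.swap i (i + 1)

/-- `u` and `v` have separated descents at position `k`, i.e.
`maxdes(u) ≤ k ≤ mindes(v)` (in 0-based conventions: `u` has no descent at any
0-based position `≥ k` and `v` has no descent at any 0-based position `< k-1`). -/
def SepDesc (k : ℕ) (u v : Equiv.Perm ℕ) : Prop :=
  (∀ i, k ≤ i → u i ≤ u (i + 1)) ∧ (∀ i, i + 1 < k → v i ≤ v (i + 1))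

/-- The longest element `n ⋯ 2 1` of `S_n`, extended by the identity. -/
def revPerm (n : ℕ) : Equiv.Perm ℕ where
  toFun j := if j < n then n - 1 - j else j
  invFun j := if j < n then n - 1 - j else j
  left_inv j := by dsimp only; split_ifs <;> omega
  right_inv j := by dsimp only; split_ifs <;> omega

/-- Exchange the values of a valuation at the indices `i` and `i+1`. -/
def swapVal {K : Type*} (t : ℕ → K) (i : ℕ) : ℕ → K :=
  fun j => if j = i then t (i + 1) else if j = i + 1 then t i else t j

/-- The defining properties of the family of double Grothendieck polynomials
`𝔊_w(x, t)`, viewed as a family of polynomials in the `x`-variables depending on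
a valuation `t` of the second set of variables:  the initial condition
`𝔊_{n⋯21}(x,t) = ∏_{i+j≤n} (x_i ⊖ t_j)` together with the Demazure recursion
`π_i 𝔊_w = 𝔊_{w s_i}` whenever `w(i) > w(i+1)` (the latter written with the
denominator `x_i - x_{i+1}` cleared). -/
def GrothFamily {K : Type*} [Field K] (β : K)
    (G : (ℕ → K) → Equiv.Perm ℕ → MvPolynomial ℕ K) : Prop :=
  ∀ t : ℕ → K, (∀ j, 1 + β * t j ≠ 0) →
    (∀ n : ℕ, G t (revPerm n) =
      ∏ i ∈ Finset.range n, ∏ j ∈ Finset.range (n - 1 - i),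
        C ((1 + β * t j)⁻¹) * (X i - C (t j))) ∧
    (∀ (w : Equiv.Perm ℕ) (i : ℕ), w (i + 1) < w i →
      (X i - X (i + 1)) * G t (w * sTr i) =
        (1 + C β * X (i + 1)) * G t w
          - (1 + C β * X i) * rename ⇑(Equiv.swap i (i + 1)) (G t w))

/-- The defining property of the structure constants `c_{u,v}^w(t,y)`:
`𝔊_u(x,y) · 𝔊_v(x,t) = Σ_w c_{u,v}^w(t,y) · 𝔊_w(x,t)`, the (finitely supported)
sum ranging over the permutations `w ∈ S_∞`. -/
def StructConsts {K : Type*} [Field K] (β : K)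
    (G : (ℕ → K) → Equiv.Perm ℕ → MvPolynomial ℕ K)
    (c : (ℕ → K) → (ℕ → K) → Equiv.Perm ℕ → Equiv.Perm ℕ → Equiv.Perm ℕ → K) : Prop :=
  ∀ t y : ℕ → K, (∀ j, 1 + β * t j ≠ 0) → (∀ j, 1 + β * y j ≠ 0) →
    ∀ u v : Equiv.Perm ℕ, FinPerm u → FinPerm v →
      {w : Equiv.Perm ℕ | c t y u v w ≠ 0}.Finite ∧
      (∀ w, ¬ FinPerm w → c t y u v w = 0) ∧
      G y u * G t v = ∑ᶠ w : Equiv.Perm ℕ, C (c t y u v w) * G t w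

/-! ### The lattice model / pipe puzzles -/

/-- A state of the `n × n` lattice model: labels in `{0, …, n}` on all horizontal
and vertical (half-)edges.  `sst.1 i j` is the `j`-th horizontal (half-)edge of row
`i` (`j = 0` being the left boundary and `j = n` the right boundary), and
`sst.2 i j` is the `i`-th vertical (half-)edge of column `j` (`i = 0` the top
boundary, `i = n` the bottom boundary). -/
abbrev GridState (n : ℕ) : Type :=
  (Fin n → Fin (n + 1) → Fin (n + 1)) × (Fin (n + 1) → Fin n → Fin (n + 1))

/-- The label on the north edge of the tile in row `i`, column `j`. -/
def labN {n : ℕ} (sst : GridState n) (i j : Fin n) : ℕ := (sst.2 i.castSucc j : ℕ)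
/-- The label on the east edge of the tile in row `i`, column `j`. -/
def labE {n : ℕ} (sst : GridState n) (i j : Fin n) : ℕ := (sst.1 i j.succ : ℕ)
/-- The label on the west edge of the tile in row `i`, column `j`. -/
def labW {n : ℕ} (sst : GridState n) (i j : Fin n) : ℕ := (sst.1 i j.castSucc : ℕ)
/-- The label on the south edge of the tile in row `i`, column `j`. -/
def labS {n : ℕ} (sst : GridState n) (i j : Fin n) : ℕ := (sst.2 i.succ j : ℕ)

/-- Boundary label `κ_u` on the right side (0-based row `i`, 1-based pipe labels). -/
def kappaLab (k : ℕ) (u : Equiv.Perm ℕ) (i : ℕ) : ℕ :=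
  if u⁻¹ i < k then u⁻¹ i + 1 else 0

/-- Boundary label `θ_v` on the top side (0-based column `j`, 1-based pipe labels). -/
def thetaLab (k : ℕ) (v : Equiv.Perm ℕ) (j : ℕ) : ℕ :=
  if k ≤ v⁻¹ j then v⁻¹ j + 1 else 0

/-- Boundary label `η_w` on the bottom side (0-based column `j`, 1-based pipe labels). -/
def etaLab (w : Equiv.Perm ℕ) (j : ℕ) : ℕ := w⁻¹ j + 1

/-- The boundary condition for pipe puzzles for `(u, v, w)`: left edges all `0`,
right edges `κ_u`, top edges `θ_v`, bottom edges `η_w`. -/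
def BoundaryCond (n k : ℕ) (u v w : Equiv.Perm ℕ) (sst : GridState n) : Prop :=
  (∀ i : Fin n, (sst.1 i 0 : ℕ) = 0) ∧
  (∀ i : Fin n, (sst.1 i (Fin.last n) : ℕ) = kappaLab k u (i : ℕ)) ∧
  (∀ j : Fin n, (sst.2 0 j : ℕ) = thetaLab k v (j : ℕ)) ∧
  (∀ j : Fin n, (sst.2 (Fin.last n) j : ℕ) = etaLab w (j : ℕ))

/-- The admissible local configurations (tiles) of a pipe puzzle, in terms of the
four edge labels `N, E, W, S` around a tile:  the empty tile, the vertical pipe,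
the horizontal pipe, the crossing (with the horizontal pipe carrying the smaller
label), the two elbows `⌟` and `⌐` (labels `≤ k` coming from the right side,
labels `> k` from the top side), and the bumping tiles (with the stated label
restrictions). -/
def LAdm (k N E W S : ℕ) : Prop :=
  (N = 0 ∧ E = 0 ∧ W = 0 ∧ S = 0) ∨
  (E = 0 ∧ W = 0 ∧ 0 < N ∧ N = S) ∨
  (N = 0 ∧ S = 0 ∧ 0 < E ∧ E = W) ∨
  (0 < E ∧ E = W ∧ E < N ∧ N = S) ∨
  (E = 0 ∧ S = 0 ∧ 0 < N ∧ N = W ∧ N ≤ k) ∨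
  (E = 0 ∧ S = 0 ∧ N = W ∧ k < N) ∨
  (N = 0 ∧ W = 0 ∧ 0 < E ∧ E = S ∧ E ≤ k) ∨
  (N = 0 ∧ W = 0 ∧ E = S ∧ k < E) ∨
  (0 < E ∧ E = S ∧ E < N ∧ N = W ∧ N ≤ k) ∨
  (k < E ∧ E = S ∧ E < N ∧ N = W) ∨
  (0 < N ∧ N = W ∧ N ≤ k ∧ E = S ∧ k < E)

/-- The admissible local configurations of a Schubert pipe puzzle (no bumping
tiles; crossings have the horizontal pipe carrying the smaller label). -/
def LAdm0 (N E W S : ℕ) : Prop :=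
  (N = 0 ∧ E = 0 ∧ W = 0 ∧ S = 0) ∨
  (E = 0 ∧ W = 0 ∧ 0 < N ∧ N = S) ∨
  (N = 0 ∧ S = 0 ∧ 0 < E ∧ E = W) ∨
  (0 < E ∧ E = W ∧ E < N ∧ N = S) ∨
  (E = 0 ∧ S = 0 ∧ 0 < N ∧ N = W) ∨
  (N = 0 ∧ W = 0 ∧ 0 < E ∧ E = S)

/-- The vertex weight `L(x; N, E, W, S)` of the lattice model (equivalently, the
weight of the corresponding pipe-puzzle tile), with spectral parameter `x`. -/
def Lwt {K : Type*} [Field K] (β : K) (k : ℕ) (x : K) (N E W S : ℕ) : K :=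
  if N = 0 ∧ E = 0 ∧ W = 0 ∧ S = 0 then x
  else if E = 0 ∧ W = 0 ∧ 0 < N ∧ N = S then 1
  else if N = 0 ∧ S = 0 ∧ 0 < E ∧ E = W then 1
  else if 0 < E ∧ E = W ∧ E < N ∧ N = S then 1
  else if E = 0 ∧ S = 0 ∧ 0 < N ∧ N = W ∧ N ≤ k then 1 + β * x
  else if E = 0 ∧ S = 0 ∧ N = W ∧ k < N then 1
  else if N = 0 ∧ W = 0 ∧ 0 < E ∧ E = S ∧ E ≤ k then 1
  else if N = 0 ∧ W = 0 ∧ E = S ∧ k < E then 1 + β * x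
  else if 0 < E ∧ E = S ∧ E < N ∧ N = W ∧ N ≤ k then β
  else if k < E ∧ E = S ∧ E < N ∧ N = W then β
  else if 0 < N ∧ N = W ∧ N ≤ k ∧ E = S ∧ k < E then β * (1 + β * x)
  else 0

/-- The set of pipe puzzles for `(u, v, w)` (with separated-descent parameter `k`),
encoded as admissible states of the lattice model. -/
def PP (n k : ℕ) (u v w : Equiv.Perm ℕ) : Set (GridState n) :=
  {sst | BoundaryCond n k u v w sst ∧
    ∀ i j : Fin n, LAdm k (labN sst i j) (labE sst i j) (labW sst i j) (labS sst i j)}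

/-- The set of Schubert pipe puzzles for `(u, v, w)`. -/
def PP0 (n k : ℕ) (u v w : Equiv.Perm ℕ) : Set (GridState n) :=
  {sst | BoundaryCond n k u v w sst ∧
    ∀ i j : Fin n, LAdm0 (labN sst i j) (labE sst i j) (labW sst i j) (labS sst i j)}

/-- The weight `wt(π)` of a pipe puzzle: the product over all tiles, the tile in
row `i` and column `j` having spectral parameter `t_j ⊖ y_i`. -/
def stateWt {K : Type*} [Field K] (β : K) (k : ℕ) (t y : ℕ → K) {n : ℕ}
    (sst : GridState n) : K :=
  ∏ i : Fin n, ∏ j : Fin n,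
    Lwt β k (ominus β (t (j : ℕ)) (y (i : ℕ)))
      (labN sst i j) (labE sst i j) (labW sst i j) (labS sst i j)

/-- The Schubert weight `wt₀(π)`: the product of `t_j - y_i` over the positions
`(i, j)` of the empty tiles. -/
def stateWt0 {K : Type*} [Field K] (t y : ℕ → K) {n : ℕ} (sst : GridState n) : K :=
  ∏ i : Fin n, ∏ j : Fin n,
    if labN sst i j = 0 ∧ labE sst i j = 0 ∧ labW sst i j = 0 ∧ labS sst i j = 0
    then t (j : ℕ) - y (i : ℕ) else 1

/-!
Exchanging `t_i` and `t_{i+1}` acts on double Grothendieck polynomials by a divided difference in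
the `t`-variables: `𝔊_σ(x, s_i t) = 𝔊_σ(x, t)` if `ℓ(s_i σ) > ℓ(σ)`, and otherwise
`(1 + β t_i) 𝔊_σ(x, t) = (1 + β t_{i+1}) 𝔊_σ(x, s_i t) + (t_{i+1} - t_i) 𝔊_{s_i σ}(x, s_i t)`.
For the longest element of `S_m` this is a computation with the single factor `x_j ⊖ t_i` of the
product formula, and it propagates to all of `S_m` along the `x`-side Demazure recursion, which
commutes with the exchange of `t_i` and `t_{i+1}`.

Multiply `𝔊_u(x, y) 𝔊_v(x, t)` by `1 + β t_i` and expand it in the basis `𝔊_σ(x, s_i t)` in two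
ways: through the expansion of the product in the basis `𝔊_σ(x, t)`, and through the relation
for `𝔊_v`. Comparing the coefficients of `𝔊_w(x, s_i t)` gives the recurrences.
-/

section Permutations

variable {i j m : ℕ} {σ τ : Equiv.Perm ℕ}

lemma sTr_apply (i x : ℕ) : sTr i x = if x = i then i + 1 else if x = i + 1 then i else x := by
  simp [sTr, Equiv.swap_apply_def]

@[simp] lemma sTr_apply_left (i : ℕ) : sTr i i = i + 1 := Equiv.swap_apply_left _ _

@[simp] lemma sTr_apply_right (i : ℕ) : sTr i (i + 1) = i := Equiv.swap_apply_right _ _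

@[simp] lemma sTr_inv (i : ℕ) : (sTr i)⁻¹ = sTr i := Equiv.swap_inv _ _

@[simp] lemma sTr_mul_sTr_mul (i : ℕ) (σ : Equiv.Perm ℕ) : sTr i * (sTr i * σ) = σ := by
  rw [← mul_assoc, sTr, Equiv.swap_mul_self, one_mul]

lemma sTr_lt_sTr_iff {a b : ℕ} (h : ¬(a = j ∧ b = j + 1)) (h' : ¬(a = j + 1 ∧ b = j)) :
    sTr j a < sTr j b ↔ a < b := by
  rw [sTr_apply, sTr_apply]
  split_ifs <;> omega

@[simp] lemma inv_sTr_mul_apply_left (i : ℕ) (σ : Equiv.Perm ℕ) :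
    (sTr i * σ)⁻¹ i = σ⁻¹ (i + 1) := by
  simp [mul_inv_rev]

@[simp] lemma inv_sTr_mul_apply_right (i : ℕ) (σ : Equiv.Perm ℕ) :
    (sTr i * σ)⁻¹ (i + 1) = σ⁻¹ i := by
  simp [mul_inv_rev]

lemma InSn.finPerm (h : InSn m σ) : FinPerm σ := ⟨m, h⟩

lemma InSn.mono {m' : ℕ} (h : InSn m σ) (hm : m ≤ m') : InSn m' σ :=
  fun x hx => h x (hm.trans hx)

lemma InSn.apply_lt (h : InSn m σ) {x : ℕ} (hx : x < m) : σ x < m := by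
  by_contra hc
  have := σ.injective (h (σ x) (not_lt.mp hc))
  omega

lemma InSn.inv (h : InSn m σ) : InSn m σ⁻¹ := fun x hx => by
  rw [Equiv.Perm.inv_eq_iff_eq, h x hx]

lemma InSn.mul (hσ : InSn m σ) (hτ : InSn m τ) : InSn m (σ * τ) := fun x hx => by
  rw [Equiv.Perm.mul_apply, hτ x hx, hσ x hx]

lemma inSn_sTr (hi : i + 1 < m) : InSn m (sTr i) := fun x hx => by
  rw [sTr_apply]; split_ifs <;> omega

lemma FinPerm.exists_inSn (h : FinPerm σ) (m₀ : ℕ) : ∃ m, m₀ ≤ m ∧ InSn m σ := by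
  obtain ⟨N, hN⟩ := h
  exact ⟨max N m₀, le_max_right _ _, InSn.mono hN (le_max_left _ _)⟩

lemma FinPerm.sTr_mul (h : FinPerm σ) (i : ℕ) : FinPerm (sTr i * σ) := by
  obtain ⟨m, hm, hσ⟩ := h.exists_inSn (i + 2)
  exact ((inSn_sTr (by omega)).mul hσ).finPerm

lemma FinPerm.inv (h : FinPerm σ) : FinPerm σ⁻¹ := by
  obtain ⟨m, -, hm⟩ := h.exists_inSn 0
  exact hm.inv.finPerm

def inversions (σ : Equiv.Perm ℕ) : Set (ℕ × ℕ) := {p | p.1 < p.2 ∧ σ p.2 < σ p.1}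

lemma len_eq_ncard_inversions (σ : Equiv.Perm ℕ) : len σ = (inversions σ).ncard := rfl

lemma len_inv (σ : Equiv.Perm ℕ) : len σ⁻¹ = len σ := by
  refine Set.ncard_congr (fun p _ => (σ⁻¹ p.2, σ⁻¹ p.1)) ?_ ?_ ?_
  · rintro ⟨p, q⟩ ⟨hpq, hqp⟩
    exact ⟨hqp, by simpa using hpq⟩
  · rintro ⟨p, q⟩ ⟨p', q'⟩ _ _ h
    simp only [Prod.mk.injEq, EmbeddingLike.apply_eq_iff_eq] at h
    simp [h]
  · rintro ⟨p, q⟩ ⟨hpq, hqp⟩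
    exact ⟨(σ q, σ p), ⟨hqp, by simpa using hpq⟩, by simp⟩

lemma InSn.inversions_subset (h : InSn m σ) :
    inversions σ ⊆ ↑(Finset.range m ×ˢ Finset.range m) := by
  rintro ⟨p, q⟩ ⟨hpq, hqp : σ q < σ p⟩
  have hq : q < m := by
    by_contra hq
    have hσq := h q (not_lt.mp hq)
    by_cases hp : p < m
    · have := h.apply_lt hp; omega
    · have := h p (not_lt.mp hp); omega
  simp only [Finset.coe_product, Finset.coe_range, Set.mem_prod, Set.mem_Iio]
  omega

lemma InSn.len_le (h : InSn m σ) : len σ ≤ m * m := by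
  calc len σ ≤ (↑(Finset.range m ×ˢ Finset.range m) : Set (ℕ × ℕ)).ncard :=
        Set.ncard_le_ncard h.inversions_subset (Finset.finite_toSet _)
    _ = m * m := by rw [Set.ncard_coe_finset, Finset.card_product, Finset.card_range]

lemma inversions_sTr_mul (h : σ⁻¹ i < σ⁻¹ (i + 1)) :
    inversions (sTr i * σ) = insert (σ⁻¹ i, σ⁻¹ (i + 1)) (inversions σ) := by
  ext ⟨p, q⟩
  have hp : p = σ⁻¹ i ↔ σ p = i := by rw [eq_comm, Equiv.Perm.inv_eq_iff_eq, eq_comm]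
  have hq : q = σ⁻¹ (i + 1) ↔ σ q = i + 1 := by
    rw [eq_comm, Equiv.Perm.inv_eq_iff_eq, eq_comm]
  have hinj : ¬(p < q ∧ σ p = σ q) := fun ⟨hlt, he⟩ => (σ.injective he ▸ hlt).false
  have hasc : ¬(σ p = i ∧ σ q = i + 1 ∧ q ≤ p) := fun ⟨h1, h2, hle⟩ => by
    rw [← h2, ← h1] at h
    simp only [Equiv.Perm.coe_inv, Equiv.symm_apply_apply] at h
    omega
  have hdesc : ¬(σ q = i ∧ σ p = i + 1 ∧ p < q) := fun ⟨h1, h2, hlt⟩ => by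
    rw [← h2, ← h1] at h
    simp only [Equiv.Perm.coe_inv, Equiv.symm_apply_apply] at h
    omega
  simp only [inversions, Set.mem_insert_iff, Set.mem_ofPred_eq, Prod.mk.injEq,
    Equiv.Perm.mul_apply, hp, hq]
  clear h hp hq
  rw [sTr_apply, sTr_apply]
  split_ifs <;> omega

lemma FinPerm.inversions_finite (h : FinPerm σ) : (inversions σ).Finite := by
  obtain ⟨m, hm⟩ := h
  exact (Finset.finite_toSet _).subset (InSn.inversions_subset hm)

lemma len_sTr_mul (hσ : FinPerm σ) (h : σ⁻¹ i < σ⁻¹ (i + 1)) :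
    len (sTr i * σ) = len σ + 1 := by
  rw [len_eq_ncard_inversions, inversions_sTr_mul h,
    Set.ncard_insert_of_notMem _ hσ.inversions_finite, len_eq_ncard_inversions]
  simp [inversions]

lemma len_mul_sTr (hσ : FinPerm σ) (h : σ j < σ (j + 1)) : len (σ * sTr j) = len σ + 1 := by
  rw [← len_inv, mul_inv_rev, sTr_inv, len_sTr_mul hσ.inv (by simpa using h), len_inv]

lemma inv_succ_lt_of_not_lt (h : ¬σ⁻¹ i < σ⁻¹ (i + 1)) : σ⁻¹ (i + 1) < σ⁻¹ i :=
  lt_of_le_of_ne (not_lt.mp h) (σ⁻¹.injective.ne (by omega))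

lemma inv_lt_inv_of_len_lt (hσ : FinPerm σ) (h : len σ < len (sTr i * σ)) :
    σ⁻¹ i < σ⁻¹ (i + 1) := by
  by_contra hc
  have hlt : (sTr i * σ)⁻¹ i < (sTr i * σ)⁻¹ (i + 1) := by
    have := σ⁻¹.injective.ne (show i ≠ i + 1 by omega)
    simp only [inv_sTr_mul_apply_left, inv_sTr_mul_apply_right]
    omega
  have := len_sTr_mul (hσ.sTr_mul i) hlt
  rw [sTr_mul_sTr_mul] at this
  omega

lemma inv_lt_inv_of_len_gt (hσ : FinPerm σ) (h : len (sTr i * σ) < len σ) :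
    σ⁻¹ (i + 1) < σ⁻¹ i := by
  have := inv_lt_inv_of_len_lt (hσ.sTr_mul i) (i := i) (by rwa [sTr_mul_sTr_mul])
  simpa using this

lemma revPerm_apply (m x : ℕ) : revPerm m x = if x < m then m - 1 - x else x := rfl

@[simp] lemma revPerm_inv (m : ℕ) : (revPerm m)⁻¹ = revPerm m := rfl

lemma InSn.eq_revPerm (h : InSn m σ) (hdesc : ∀ j, j + 1 < m → σ (j + 1) < σ j) :
    σ = revPerm m := by
  have hle : ∀ x < m, σ x ≤ m - 1 - x := by
    intro x
    induction x with
    | zero => intro hx; have := h.apply_lt hx; omega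
    | succ x ih => intro hx; have := ih (by omega); have := hdesc x hx; omega
  have hge : ∀ k x, x + k + 1 = m → k ≤ σ x := by
    intro k
    induction k with
    | zero => intros; omega
    | succ k ih =>
      intro x hx
      have := ih (x + 1) (by omega)
      have := hdesc x (by omega)
      omega
  ext x
  rw [revPerm_apply]
  split_ifs with hx
  · have := hle x hx; have := hge (m - 1 - x) x (by omega); omega
  · exact h x (not_lt.mp hx)

end Permutations

section SwapVal

variable {K : Type*} (t : ℕ → K) (i : ℕ)

@[simp] lemma swapVal_apply_left : swapVal t i i = t (i + 1) := by simp [swapVal]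

@[simp] lemma swapVal_apply_right : swapVal t i (i + 1) = t i := by simp [swapVal]

lemma swapVal_eq_comp : swapVal t i = t ∘ sTr i := by
  funext j
  simp only [swapVal, Function.comp_apply, sTr_apply]
  split_ifs <;> simp_all

@[simp] lemma swapVal_swapVal : swapVal (swapVal t i) i = t := by
  funext j
  simp [swapVal_eq_comp, sTr, Equiv.swap_apply_self]

end SwapVal

lemma one_add_mul_swapVal_ne_zero {K : Type*} [Semiring K] {β : K} {t : ℕ → K}
    (ht : ∀ j, 1 + β * t j ≠ 0) (i j : ℕ) : 1 + β * swapVal t i j ≠ 0 := by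
  rw [swapVal_eq_comp]
  exact ht _

section Demazure

variable {R : Type*} [CommRing R]

/-- The numerator `(x_j - x_{j+1}) · π_j f` of the Demazure operator. -/
def demazureNum (β : R) (j : ℕ) : MvPolynomial ℕ R →ₗ[R] MvPolynomial ℕ R :=
  LinearMap.mulLeft R (1 + C β * X (j + 1)) -
    LinearMap.mulLeft R (1 + C β * X j) ∘ₗ (rename (Equiv.swap j (j + 1))).toLinearMap

lemma demazureNum_apply (β : R) (j : ℕ) (f : MvPolynomial ℕ R) :
    demazureNum β j f =
      (1 + C β * X (j + 1)) * f - (1 + C β * X j) * rename (Equiv.swap j (j + 1)) f := rfl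

@[simp] lemma rename_swap_rename_swap (a b : ℕ) (p : MvPolynomial ℕ R) :
    rename (Equiv.swap a b) (rename (Equiv.swap a b) p) = p := by
  rw [rename_rename, ← Equiv.coe_trans, Equiv.swap_swap, Equiv.coe_refl, rename_id_apply]

variable [IsDomain R] {β : R} {j : ℕ}

lemma X_sub_X_succ_ne_zero (j : ℕ) : (X j - X (j + 1) : MvPolynomial ℕ R) ≠ 0 :=
  sub_ne_zero.mpr fun h => by simpa using X_injective h

lemma rename_swap_eq_of_mul_eq {f g : MvPolynomial ℕ R}
    (h : (X j - X (j + 1)) * g = demazureNum β j f) :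
    rename (Equiv.swap j (j + 1)) g = g := by
  rw [demazureNum_apply] at h
  have hs := congrArg (rename (Equiv.swap j (j + 1))) h
  simp only [map_mul, map_sub, map_add, map_one, rename_X, rename_C,
    Equiv.swap_apply_left, Equiv.swap_apply_right, rename_swap_rename_swap] at hs
  refine mul_left_cancel₀ (X_sub_X_succ_ne_zero (R := R) j) ?_
  linear_combination -hs - h

lemma demazureNum_of_mul_eq {f g : MvPolynomial ℕ R}
    (h : (X j - X (j + 1)) * g = demazureNum β j f) :
    demazureNum β j g = -C β * ((X j - X (j + 1)) * g) := by
  rw [demazureNum_apply, rename_swap_eq_of_mul_eq h]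
  ring

lemma smul_add_smul_of_demazureNum {a b d : R} {f₁ f₂ f₃ g₁ g₂ g₃ : MvPolynomial ℕ R}
    (h₁ : (X j - X (j + 1)) * g₁ = demazureNum β j f₁)
    (h₂ : (X j - X (j + 1)) * g₂ = demazureNum β j f₂)
    (h₃ : (X j - X (j + 1)) * g₃ = demazureNum β j f₃)
    (hf : b • f₁ = a • f₂ + d • f₃) : b • g₁ = a • g₂ + d • g₃ := by
  refine mul_left_cancel₀ (X_sub_X_succ_ne_zero j) ?_
  rw [mul_add, mul_smul_comm, mul_smul_comm, mul_smul_comm, h₁, h₂, h₃, ← map_smul, hf,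
    map_add, map_smul, map_smul]

/-- This is where `π_j ∘ π_j = -β π_j` enters. -/
lemma smul_eq_smul_of_demazureNum {a b d : R} {f₁ f₂ g₁ g₂ : MvPolynomial ℕ R}
    (h₁ : (X j - X (j + 1)) * g₁ = demazureNum β j f₁)
    (h₂ : (X j - X (j + 1)) * g₂ = demazureNum β j f₂)
    (hf : b • f₁ = a • f₂ + d • g₂) : b • g₁ = (a - d * β) • g₂ := by
  refine mul_left_cancel₀ (X_sub_X_succ_ne_zero j) ?_
  rw [mul_smul_comm, mul_smul_comm, h₁, ← map_smul, hf, map_add, map_smul, map_smul, ← h₂,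
    demazureNum_of_mul_eq h₂]
  simp only [smul_eq_C_mul, map_sub, map_mul]
  ring

end Demazure

section Staircase

open Finset

variable {M : Type*} [CommMonoid M]

lemma prod_comp_of_involutive {α : Type*} {s : Finset α} {e : α → α}
    (he : Function.Involutive e) (hs : ∀ a ∈ s, e a ∈ s) (f : α → M) :
    ∏ a ∈ s, f (e a) = ∏ a ∈ s, f a :=
  prod_nbij' e e hs hs (fun a _ => he a) (fun a _ => he a) fun _ _ => rfl

def staircase (m : ℕ) : Finset (ℕ × ℕ) := (range m ×ˢ range m).filter fun p => p.1 + p.2 + 1 < m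

lemma mem_staircase {m : ℕ} {p : ℕ × ℕ} : p ∈ staircase m ↔ p.1 + p.2 + 1 < m := by
  simp only [staircase, mem_filter, mem_product, mem_range]
  omega

lemma prod_staircase (m : ℕ) (f : ℕ → ℕ → M) :
    ∏ p ∈ staircase m, f p.1 p.2 = ∏ a ∈ range m, ∏ b ∈ range (m - 1 - a), f a b :=
  prod_finset_product _ _ _ fun p => by simp only [mem_staircase, mem_range]; omega

variable {i j m : ℕ}

lemma prod_staircase_erase_comp_sTr (hm : j + i + 2 = m) (f : ℕ → ℕ → M) :
    ∏ p ∈ (staircase m).erase (j, i), f p.1 (sTr i p.2) =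
      ∏ p ∈ (staircase m).erase (j, i), f p.1 p.2 := by
  refine prod_comp_of_involutive (e := fun p => (p.1, sTr i p.2)) (fun p => ?_) (fun p hp => ?_)
    (fun p => f p.1 p.2)
  · simp [sTr, Equiv.swap_apply_self]
  · simp only [mem_erase, mem_staircase, ne_eq, Prod.ext_iff] at hp ⊢
    rw [sTr_apply]
    split_ifs <;> omega

lemma prod_staircase_erase_comp_swap (hm : j + i + 2 = m) (f : ℕ → ℕ → M) :
    ∏ p ∈ (staircase m).erase (j, i), f (Equiv.swap j (j + 1) p.1) p.2 =
      ∏ p ∈ (staircase m).erase (j, i), f p.1 p.2 := by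
  refine prod_comp_of_involutive (e := fun p => (Equiv.swap j (j + 1) p.1, p.2)) (fun p => ?_)
    (fun p hp => ?_) (fun p => f p.1 p.2)
  · simp [Equiv.swap_apply_self]
  · simp only [mem_erase, mem_staircase, ne_eq, Prod.ext_iff] at hp ⊢
    rw [Equiv.swap_apply_def]
    split_ifs <;> omega

end Staircase

section LinearAlgebra

variable {K V ι : Type*} [DivisionRing K] [AddCommGroup V] [Module K V]

theorem _root_.LinearIndependent.exists_coord {v : ι → V} (hv : LinearIndependent K v) (i : ι) :
    ∃ φ : V →ₗ[K] K, φ (v i) = 1 ∧ ∀ j, j ≠ i → φ (v j) = 0 := by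
  classical
  have hb (j : ι) : Module.Basis.sumExtend hv (Sum.inl j) = v j := by
    simp only [Module.Basis.sumExtend, Module.Basis.reindex_apply, Module.Basis.coe_extend]
    rfl
  refine ⟨(Module.Basis.sumExtend hv).coord (Sum.inl i), ?_, fun j hj => ?_⟩ <;>
    rw [← hb, Module.Basis.coord_apply, Module.Basis.repr_self]
  · exact Finsupp.single_eq_same
  · exact Finsupp.single_eq_of_ne (by simpa [eq_comm] using hj)

theorem _root_.LinearMap.map_finsum_smul {R M : Type*} [CommSemiring R] [AddCommMonoid M]
    [Module R M] (φ : M →ₗ[R] R) {a : ι → R} (ha : (Function.support a).Finite) (p : ι → M) :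
    φ (∑ᶠ σ, a σ • p σ) = ∑ᶠ σ, a σ * φ (p σ) := by
  rw [map_finsum φ (ha.subset fun σ hσ h0 => hσ (by simp [h0]))]
  simp only [map_smul, smul_eq_mul]

end LinearAlgebra

section Grothendieck

variable {K : Type*} [Field K]

/-- The `t`-side Demazure relation for `𝔊_σ`; `σ⁻¹ i < σ⁻¹ (i + 1)` means `ℓ(s_i σ) > ℓ(σ)`. -/
def SwapValRel (β : K) (G : (ℕ → K) → Equiv.Perm ℕ → MvPolynomial ℕ K) (t : ℕ → K) (i : ℕ)
    (σ : Equiv.Perm ℕ) : Prop :=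
  (σ⁻¹ i < σ⁻¹ (i + 1) → G (swapVal t i) σ = G t σ) ∧
  (σ⁻¹ (i + 1) < σ⁻¹ i → (1 + β * t (i + 1)) • G (swapVal t i) σ =
    (1 + β * t i) • G t σ + (t i - t (i + 1)) • G t (sTr i * σ))

variable {β : K} {G : (ℕ → K) → Equiv.Perm ℕ → MvPolynomial ℕ K}
  {c : (ℕ → K) → (ℕ → K) → Equiv.Perm ℕ → Equiv.Perm ℕ → Equiv.Perm ℕ → K}
  {t y : ℕ → K} {u v w σ τ : Equiv.Perm ℕ} {i j m : ℕ} {φ : MvPolynomial ℕ K →ₗ[K] K}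

namespace GrothFamily

lemma mul_apply_mul_sTr (hG : GrothFamily β G) (ht : ∀ j, 1 + β * t j ≠ 0) (hw : w (j + 1) < w j) :
    (X j - X (j + 1)) * G t (w * sTr j) = demazureNum β j (G t w) :=
  (hG t ht).2 w j hw

lemma apply_revPerm (hG : GrothFamily β G) (ht : ∀ j, 1 + β * t j ≠ 0) (m : ℕ) :
    G t (revPerm m) = ∏ p ∈ staircase m, C ((1 + β * t p.2)⁻¹) * (X p.1 - C (t p.2)) := by
  rw [prod_staircase m fun a b => C ((1 + β * t b)⁻¹) * (X a - C (t b))]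
  exact (hG t ht).1 m

/-- All factors of `𝔊_{revPerm m}(x, t)` but `x_j ⊖ t_i` are symmetric in `t_i, t_{i+1}` and in
`x_j, x_{j+1}`. -/
lemma swapValRel_revPerm (hG : GrothFamily β G) (ht : ∀ j, 1 + β * t j ≠ 0)
    (hm : j + i + 2 = m) : SwapValRel β G t i (revPerm m) := by
  refine ⟨fun h => ?_, fun _ => ?_⟩
  · simp only [revPerm_inv, revPerm_apply] at h
    split_ifs at h <;> omega
  set f : ℕ → K → MvPolynomial ℕ K := fun a b => C ((1 + β * b)⁻¹) * (X a - C b)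
  set W := ∏ p ∈ (staircase m).erase (j, i), f p.1 (t p.2)
  have hcorner : (j, i) ∈ staircase m := mem_staircase.2 (by omega)
  have hGt : G t (revPerm m) = f j (t i) * W := by
    rw [hG.apply_revPerm ht, ← Finset.mul_prod_erase _ _ hcorner]
  have hGs : G (swapVal t i) (revPerm m) = f j (t (i + 1)) * W := by
    rw [hG.apply_revPerm (one_add_mul_swapVal_ne_zero ht i), ← Finset.mul_prod_erase _ _ hcorner,
      swapVal_apply_left, swapVal_eq_comp]
    exact congrArg _ (prod_staircase_erase_comp_sTr hm fun a b => f a (t b))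
  have hW : rename (Equiv.swap j (j + 1)) W = W := by
    simp only [W, f, map_prod, map_mul, map_sub, rename_C, rename_X]
    exact prod_staircase_erase_comp_swap hm fun a b => C ((1 + β * t b)⁻¹) * (X a - C (t b))
  have hrec : (X j - X (j + 1)) * G t (sTr i * revPerm m) =
      demazureNum β j (G t (revPerm m)) := by
    have hcomm : revPerm m * sTr j = sTr i * revPerm m := by
      ext x
      simp only [Equiv.Perm.mul_apply, revPerm_apply, sTr_apply]
      split_ifs <;> omega
    rw [← hcomm]
    exact hG.mul_apply_mul_sTr ht (by simp only [revPerm_apply]; split_ifs <;> omega)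
  have hinv (a : K) (ha : 1 + β * a ≠ 0) :
      (1 + C β * C a) * C ((1 + β * a)⁻¹) = (1 : MvPolynomial ℕ K) := by
    rw [← C_mul, ← C_1, ← C_add, ← C_mul, mul_inv_cancel₀ ha]
  refine mul_left_cancel₀ (X_sub_X_succ_ne_zero j) ?_
  rw [mul_add, mul_smul_comm, mul_smul_comm, mul_smul_comm, hrec, hGt, hGs, demazureNum_apply,
    map_mul, hW]
  simp only [f, smul_eq_C_mul, map_mul, map_sub, map_add, map_one, rename_C, rename_X,
    Equiv.swap_apply_left]
  linear_combination (X j - X (j + 1)) * (X j - C (t (i + 1))) * W * hinv _ (ht (i + 1))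
    - (X j - X (j + 1)) * (X j - C (t (i + 1))) * W * hinv _ (ht i)

lemma swapValRel_mul_sTr (hG : GrothFamily β G) (ht : ∀ j, 1 + β * t j ≠ 0)
    (hτ : τ (j + 1) < τ j) (h : SwapValRel β G t i τ) : SwapValRel β G t i (τ * sTr j) := by
  have hrt := hG.mul_apply_mul_sTr ht hτ
  have hrs := hG.mul_apply_mul_sTr (one_add_mul_swapVal_ne_zero ht i) hτ
  have hinv (x : ℕ) : (τ * sTr j)⁻¹ x = sTr j (τ⁻¹ x) := by simp [mul_inv_rev]
  have hτinv (x y : ℕ) : τ⁻¹ x = y ↔ τ y = x := by rw [Equiv.Perm.inv_eq_iff_eq, eq_comm]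
  by_cases hspec : τ j = i + 1 ∧ τ (j + 1) = i
  · have hcomm : sTr i * τ = τ * sTr j := by
      ext x
      have h1 : τ x = i ↔ x = j + 1 := by rw [← hspec.2, τ.injective.eq_iff]
      have h2 : τ x = i + 1 ↔ x = j := by rw [← hspec.1, τ.injective.eq_iff]
      simp only [Equiv.Perm.mul_apply, sTr_apply, h1, h2]
      split_ifs <;> omega
    have hτi : τ⁻¹ i = j + 1 := (hτinv _ _).2 hspec.2
    have hτi' : τ⁻¹ (i + 1) = j := (hτinv _ _).2 hspec.1
    have key := smul_eq_smul_of_demazureNum hrs hrt (hcomm ▸ h.2 (by omega))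
    rw [show 1 + β * t i - (t i - t (i + 1)) * β = 1 + β * t (i + 1) by ring] at key
    refine ⟨fun _ => smul_right_injective _ (ht (i + 1)) key, fun h' => ?_⟩
    rw [hinv, hinv, hτi, hτi', sTr_apply_left, sTr_apply_right] at h'
    omega
  · have hlt : (τ * sTr j)⁻¹ i < (τ * sTr j)⁻¹ (i + 1) ↔ τ⁻¹ i < τ⁻¹ (i + 1) := by
      rw [hinv, hinv]
      refine sTr_lt_sTr_iff (fun ⟨h1, h2⟩ => ?_) (fun ⟨h1, h2⟩ => hspec ?_)
      · rw [hτinv] at h1 h2; omega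
      · rw [hτinv] at h1 h2; exact ⟨h2, h1⟩
    have hρ : (sTr i * τ) (j + 1) < (sTr i * τ) j := by
      simp only [Equiv.Perm.mul_apply]
      rw [sTr_lt_sTr_iff (fun ⟨h1, h2⟩ => hspec ⟨h2, h1⟩) (by omega)]
      exact hτ
    refine ⟨fun h' => mul_left_cancel₀ (X_sub_X_succ_ne_zero j) ?_, fun h' => ?_⟩
    · rw [hrs, hrt, h.1 (hlt.1 h')]
    · have := smul_add_smul_of_demazureNum hrs hrt (hG.mul_apply_mul_sTr ht hρ)
        (h.2 (inv_succ_lt_of_not_lt (hlt.not.1 h'.not_gt)))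
      rwa [mul_assoc] at this

theorem swapValRel (hG : GrothFamily β G) (ht : ∀ j, 1 + β * t j ≠ 0) (hσ : FinPerm σ) :
    SwapValRel β G t i σ := by
  obtain ⟨m, hm, hσm⟩ := hσ.exists_inSn (i + 2)
  induction hk : m * m - len σ using Nat.strong_induction_on generalizing σ with
  | _ k IH =>
  by_cases hdesc : ∀ j, j + 1 < m → σ (j + 1) < σ j
  · rw [hσm.eq_revPerm hdesc]
    exact hG.swapValRel_revPerm ht (j := m - 2 - i) (by omega)
  push Not at hdesc
  obtain ⟨j, hj, hasc⟩ := hdesc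
  have hasc' : σ j < σ (j + 1) := lt_of_le_of_ne hasc (σ.injective.ne (by omega))
  have hτ : (σ * sTr j) (j + 1) < (σ * sTr j) j := by simpa using hasc'
  have hτm := hσm.mul (inSn_sTr hj)
  have hlen := len_mul_sTr hσm.finPerm hasc'
  have := hG.swapValRel_mul_sTr ht hτ (IH _ (by have := hτm.len_le; omega) hτm.finPerm hτm rfl)
  rwa [mul_assoc, sTr, Equiv.swap_mul_self, mul_one] at this

lemma apply_eq_swapVal_of_lt (hG : GrothFamily β G) (ht : ∀ j, 1 + β * t j ≠ 0)
    (hσ : FinPerm σ) (h : σ⁻¹ i < σ⁻¹ (i + 1)) : G t σ = G (swapVal t i) σ := by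
  simpa using (hG.swapValRel (one_add_mul_swapVal_ne_zero ht i) hσ).1 h

lemma smul_apply_eq_swapVal_of_gt (hG : GrothFamily β G) (ht : ∀ j, 1 + β * t j ≠ 0)
    (hσ : FinPerm σ) (h : σ⁻¹ (i + 1) < σ⁻¹ i) :
    (1 + β * t i) • G t σ = (1 + β * t (i + 1)) • G (swapVal t i) σ +
      (t (i + 1) - t i) • G (swapVal t i) (sTr i * σ) := by
  simpa using (hG.swapValRel (one_add_mul_swapVal_ne_zero ht i) hσ).2 h

open Classical in
lemma map_smul_apply_of_coord_swapVal (hG : GrothFamily β G) (ht : ∀ j, 1 + β * t j ≠ 0)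
    (hw : w⁻¹ i < w⁻¹ (i + 1)) (hφw : φ (G (swapVal t i) w) = 1)
    (hφ : ∀ σ, FinPerm σ → σ ≠ w → φ (G (swapVal t i) σ) = 0) (hσ : FinPerm σ) :
    φ ((1 + β * t i) • G t σ) =
      (if σ = w then 1 + β * t i else 0) + (if σ = sTr i * w then t (i + 1) - t i else 0) := by
  have hw' : (sTr i * w)⁻¹ (i + 1) < (sTr i * w)⁻¹ i := by simpa using hw
  by_cases hσi : σ⁻¹ i < σ⁻¹ (i + 1)
  · have hσw : σ ≠ sTr i * w := fun h => by rw [h] at hσi; exact hw'.not_gt hσi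
    rw [hG.apply_eq_swapVal_of_lt ht hσ hσi, map_smul, if_neg hσw, add_zero]
    by_cases hσw' : σ = w
    · rw [if_pos hσw', hσw', hφw, smul_eq_mul, mul_one]
    · rw [if_neg hσw', hφ σ hσ hσw', smul_zero]
  have hσi' := inv_succ_lt_of_not_lt hσi
  have hσw : σ ≠ w := fun h => by rw [h] at hσi'; exact hσi'.not_gt hw
  rw [hG.smul_apply_eq_swapVal_of_gt ht hσ hσi', map_add, map_smul, map_smul, hφ σ hσ hσw,
    if_neg hσw, smul_zero, zero_add, zero_add]
  by_cases hσw' : σ = sTr i * w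
  · rw [if_pos hσw', hσw', sTr_mul_sTr_mul, hφw, smul_eq_mul, mul_one]
  · have : sTr i * σ ≠ w := fun h => hσw' (by rw [← h, sTr_mul_sTr_mul])
    rw [if_neg hσw', hφ _ (hσ.sTr_mul i) this, smul_zero]

end GrothFamily

namespace StructConsts

lemma map_smul_mul (hc : StructConsts β G c) (ht : ∀ j, 1 + β * t j ≠ 0)
    (hy : ∀ j, 1 + β * y j ≠ 0) (hu : FinPerm u) (hv : FinPerm v) (b : K) {f : Equiv.Perm ℕ → K}
    (hf : ∀ σ, FinPerm σ → φ (b • G t σ) = f σ) :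
    φ (b • (G y u * G t v)) = ∑ᶠ σ, c t y u v σ * f σ := by
  obtain ⟨hfin, hzero, hexp⟩ := hc t y ht hy u v hu hv
  simp_rw [← smul_eq_C_mul] at hexp
  rw [hexp, smul_finsum' b (hfin.subset fun σ hσ h0 => hσ (by simp [h0]))]
  simp_rw [smul_comm b]
  rw [φ.map_finsum_smul hfin]
  refine finsum_congr fun σ => ?_
  by_cases hσ : FinPerm σ
  · rw [hf σ hσ]
  · rw [hzero σ hσ, zero_mul, zero_mul]

lemma map_mul_of_coord (hc : StructConsts β G c) (ht : ∀ j, 1 + β * t j ≠ 0)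
    (hy : ∀ j, 1 + β * y j ≠ 0) (hu : FinPerm u) (hv : FinPerm v) (hφw : φ (G t w) = 1)
    (hφ : ∀ σ, FinPerm σ → σ ≠ w → φ (G t σ) = 0) :
    φ (G y u * G t v) = c t y u v w := by
  classical
  have := hc.map_smul_mul (φ := φ) ht hy hu hv 1 (f := fun σ => if σ = w then 1 else 0)
    fun σ hσ => by split_ifs with h <;> simp_all
  rw [one_smul] at this
  rw [this, finsum_eq_single _ w fun σ hσ => by simp [hσ]]
  simp

lemma map_smul_mul_of_coord_swapVal (hc : StructConsts β G c) (hG : GrothFamily β G)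
    (ht : ∀ j, 1 + β * t j ≠ 0) (hy : ∀ j, 1 + β * y j ≠ 0) (hu : FinPerm u) (hv : FinPerm v)
    (hw : w⁻¹ i < w⁻¹ (i + 1)) (hφw : φ (G (swapVal t i) w) = 1)
    (hφ : ∀ σ, FinPerm σ → σ ≠ w → φ (G (swapVal t i) σ) = 0) :
    φ ((1 + β * t i) • (G y u * G t v)) =
      (1 + β * t i) * c t y u v w + (t (i + 1) - t i) * c t y u v (sTr i * w) := by
  classical
  have hne : w ≠ sTr i * w := fun h => by
    have hw' : (sTr i * w)⁻¹ (i + 1) < (sTr i * w)⁻¹ i := by simpa using hw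
    rw [← h] at hw'
    exact hw'.not_gt hw
  rw [hc.map_smul_mul ht hy hu hv _ fun σ hσ => hG.map_smul_apply_of_coord_swapVal ht hw hφw hφ hσ,
    finsum_eq_sum_of_support_subset (s := {w, sTr i * w}) _ fun σ hσ => ?_, Finset.sum_pair hne]
  · simp only [if_pos, if_neg hne, if_neg hne.symm]
    ring
  by_contra h
  simp only [Finset.coe_insert, Finset.coe_singleton, Set.mem_insert_iff,
    Set.mem_singleton_iff, not_or] at h
  simp [h.1, h.2] at hσ

end StructConsts

end Grothendieck

theorem structure_constant_recurrence_in_w_general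
    {K : Type*} [Field K] (β : K)
    (G : (ℕ → K) → Equiv.Perm ℕ → MvPolynomial ℕ K)
    (c : (ℕ → K) → (ℕ → K) → Equiv.Perm ℕ → Equiv.Perm ℕ → Equiv.Perm ℕ → K)
    (hG : GrothFamily β G) (hc : StructConsts β G c)
    (n : ℕ) (u v w : Equiv.Perm ℕ) (hu : InSn n u) (hv : InSn n v) (hw : InSn n w)
    (i : ℕ)
    (hlen : len w < len (sTr i * w))
    (t y : ℕ → K)
    (ht : ∀ j, 1 + β * t j ≠ 0) (hy : ∀ j, 1 + β * y j ≠ 0)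
    (htt : t i ≠ t (i + 1))
    (hLI' : LinearIndependent K
      fun σ : {σ : Equiv.Perm ℕ // FinPerm σ} => G (swapVal t i) σ.1) :
    (len (sTr i * v) < len v →
      c t y u v (sTr i * w) =
        -((1 + β * t (i + 1)) / (t i - t (i + 1))) * c (swapVal t i) y u v w
          + ((1 + β * t i) / (t i - t (i + 1))) * c t y u v w
          + c (swapVal t i) y u (sTr i * v) w) ∧
    (len v < len (sTr i * v) →
      c t y u v (sTr i * w) =
        -((1 + β * t i) / (t i - t (i + 1))) * c (swapVal t i) y u v w
          + ((1 + β * t i) / (t i - t (i + 1))) * c t y u v w) := by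
  obtain ⟨φ, hφw, hφ⟩ := hLI'.exists_coord ⟨w, hw.finPerm⟩
  replace hφ : ∀ σ, FinPerm σ → σ ≠ w → φ (G (swapVal t i) σ) = 0 :=
    fun σ hσ hσw => hφ ⟨σ, hσ⟩ (Subtype.coe_ne_coe.mp hσw)
  have hcoeff := hc.map_smul_mul_of_coord_swapVal hG ht hy hu.finPerm hv.finPerm
    (inv_lt_inv_of_len_lt hw.finPerm hlen) hφw hφ
  have hcoeff_swapVal {v' : Equiv.Perm ℕ} (hv' : FinPerm v') :
      φ (G y u * G (swapVal t i) v') = c (swapVal t i) y u v' w :=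
    hc.map_mul_of_coord (one_add_mul_swapVal_ne_zero ht i) hy hu.finPerm hv' hφw hφ
  have hd : t i - t (i + 1) ≠ 0 := sub_ne_zero.mpr htt
  refine ⟨fun hv₁ => ?_, fun hv₂ => ?_⟩
  · rw [← mul_smul_comm, hG.smul_apply_eq_swapVal_of_gt ht hv.finPerm
      (inv_lt_inv_of_len_gt hv.finPerm hv₁), mul_add, mul_smul_comm, mul_smul_comm, map_add,
      map_smul, map_smul, hcoeff_swapVal hv.finPerm, hcoeff_swapVal (hv.finPerm.sTr_mul i)]
      at hcoeff
    field_simp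
    linear_combination hcoeff
  · rw [hG.apply_eq_swapVal_of_lt ht hv.finPerm (inv_lt_inv_of_len_lt hv.finPerm hv₂), map_smul,
      hcoeff_swapVal hv.finPerm] at hcoeff
    field_simp
    linear_combination hcoeff

/-- Proposition `indonw` of the paper.  Let `u, v, w ∈ S_n` and
let `s_i` be a simple transposition with `ℓ(s_i w) > ℓ(w)`.  Then `c_{u,v}^{s_i w}`
is given by the stated recurrences, according to whether `ℓ(s_i v) < ℓ(v)` or
`ℓ(s_i v) > ℓ(v)`. -/
theorem structure_constant_recurrence_in_w
    {K : Type*} [Field K] (β : K)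
    (G : (ℕ → K) → Equiv.Perm ℕ → MvPolynomial ℕ K)
    (c : (ℕ → K) → (ℕ → K) → Equiv.Perm ℕ → Equiv.Perm ℕ → Equiv.Perm ℕ → K)
    (hG : GrothFamily β G) (hc : StructConsts β G c)
    (n : ℕ) (u v w : Equiv.Perm ℕ) (hu : InSn n u) (hv : InSn n v) (hw : InSn n w)
    (i : ℕ) (hi : i + 1 < n)
    (hlen : len w < len (sTr i * w))
    (t y : ℕ → K)
    (ht : ∀ j, 1 + β * t j ≠ 0) (hy : ∀ j, 1 + β * y j ≠ 0)
    (htt : t i ≠ t (i + 1))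
    (hLI : LinearIndependent K fun σ : {σ : Equiv.Perm ℕ // FinPerm σ} => G t σ.1)
    (hLI' : LinearIndependent K
      fun σ : {σ : Equiv.Perm ℕ // FinPerm σ} => G (swapVal t i) σ.1) :
    (len (sTr i * v) < len v →
      c t y u v (sTr i * w) =
        -((1 + β * t (i + 1)) / (t i - t (i + 1))) * c (swapVal t i) y u v w
          + ((1 + β * t i) / (t i - t (i + 1))) * c t y u v w
          + c (swapVal t i) y u (sTr i * v) w) ∧
    (len v < len (sTr i * v) →
      c t y u v (sTr i * w) =
        -((1 + β * t i) / (t i - t (i + 1))) * c (swapVal t i) y u v w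
          + ((1 + β * t i) / (t i - t (i + 1))) * c t y u v w) :=
  structure_constant_recurrence_in_w_general β G c hG hc n u v w hu hv hw i hlen t y ht hy htt hLI'
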